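/- Let m ≥ 2 and n ≥ 2 be integers, and set γ_k = F_{m,k+1}/F_{m,k} and C_k = F_{m,k}^n. Then det W(P[m,n]) = (∏_{0 ≤ r < l ≤ n−2} (γ_l − γ_r)) · (∏_{k=0}^{n−2} C_k·γ_k). -/

import Mathlib

attribute [local instance] Classical.propDecidable

open Matrix

/-- Generalized Fibonacci sequence: `F_{α,0} = 1`, `F_{α,1} = 1`,
`F_{α,k} = F_{α,k-1} + (α-1)·F_{α,k-2}`. -/
noncomputable def genFib (α : ℝ) : ℕ → ℝ
  | 0 => 1
  | 1 => 1
  | k + 2 => genFib α (k + 1) + (α - 1) * genFib α k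

/-- Walk matrix of an `r × r` real matrix `B`: columns `e, B e, B² e, …, B^{r-1} e`. -/
noncomputable def walkMatrix {r : ℕ} (B : Matrix (Fin r) (Fin r) ℝ) :
    Matrix (Fin r) (Fin r) ℝ :=
  fun i k => ((B ^ (k : ℕ)) *ᵥ (fun _ => (1 : ℝ))) i

/-- The Pascal-type quotient matrix `P[m,n]`, indexed by `1, …, n-1` (here `i ↦ i.val + 1`):
`(i,j)`-entry is `C(i, n-j)·(m-1)^{n-j}` if `i + j ≥ n`, else `0`. -/
noncomputable def Pmat (m n : ℕ) : Matrix (Fin (n - 1)) (Fin (n - 1)) ℝ :=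
  fun i j =>
    if n ≤ (i.val + 1) + (j.val + 1) then
      (Nat.choose (i.val + 1) (n - (j.val + 1)) : ℝ) * ((m : ℝ) - 1) ^ (n - (j.val + 1))
    else 0

/-- The Pascal-type quotient matrix `Q[m,n]`, indexed by `1, …, n-1` (here `i ↦ i.val + 1`):
`(i,j)`-entry is `C(i-1, n-j-1)·(m-1)^{n-j}` if `i + j ≥ n`, else `0`. -/
noncomputable def Qmat (m n : ℕ) : Matrix (Fin (n - 1)) (Fin (n - 1)) ℝ :=
  fun i j =>
    if n ≤ (i.val + 1) + (j.val + 1) then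
      (Nat.choose i.val (n - (j.val + 1) - 1) : ℝ) * ((m : ℝ) - 1) ^ (n - (j.val + 1))
    else 0

/-- Vertices of the zero-divisor graph of `F^n`: nonzero zero-divisors. -/
abbrev zdVertex (F : Type) [Field F] [Fintype F] (n : ℕ) : Type :=
  {x : Fin n → F // x ≠ 0 ∧ ∃ y : Fin n → F, y ≠ 0 ∧ x * y = 0}

/-- The zero-divisor graph `Γ(R_n)` of `R_n = F × ⋯ × F` (`n` factors). -/
def zdGraph (F : Type) [Field F] [Fintype F] (n : ℕ) : SimpleGraph (zdVertex F n) where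
  Adj a b := a ≠ b ∧ (a : Fin n → F) * (b : Fin n → F) = 0
  symm := ⟨fun a b ⟨hne, h⟩ => ⟨hne.symm, by rwa [mul_comm]⟩⟩
  loopless := ⟨fun a ⟨hne, _⟩ => hne rfl⟩

/-- The set of main eigenvalues of a finite simple graph: real numbers `μ` admitting an
eigenvector of the adjacency matrix with eigenvalue `μ` and nonzero coordinate sum. -/
noncomputable def mainEigs {V : Type} [Fintype V] (G : SimpleGraph V) : Set ℝ :=
  {μ : ℝ | ∃ v : V → ℝ, v ≠ 0 ∧ (G.adjMatrix ℝ) *ᵥ v = μ • v ∧ ∑ i, v i ≠ 0}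

/-- `X_{*0}`: vertices whose `(n-1)`-st coordinate is nonzero and `n`-th coordinate is zero. -/
def Xstar0 (F : Type) [Field F] [Fintype F] (n : ℕ) (hn : 2 ≤ n) : Set (zdVertex F n) :=
  {x | (x : Fin n → F) ⟨n - 2, by omega⟩ ≠ 0 ∧ (x : Fin n → F) ⟨n - 1, by omega⟩ = 0}

/-- `X_{0*}`: vertices whose `(n-1)`-st coordinate is zero and `n`-th coordinate is nonzero. -/
def X0star (F : Type) [Field F] [Fintype F] (n : ℕ) (hn : 2 ≤ n) : Set (zdVertex F n) :=
  {x | (x : Fin n → F) ⟨n - 2, by omega⟩ = 0 ∧ (x : Fin n → F) ⟨n - 1, by omega⟩ ≠ 0}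

def subVerts (F : Type) [Field F] [Fintype F] (n : ℕ) (hn : 2 ≤ n) : Set (zdVertex F n) :=
  Xstar0 F n hn ∪ X0star F n hn

/-- The bipartite subgraph `Γ'(R_n)` of `Γ(R_n)` induced by `X_{*0} ∪ X_{0*}`. -/
def zdSubGraph (F : Type) [Field F] [Fintype F] (n : ℕ) (hn : 2 ≤ n) :
    SimpleGraph ↥(subVerts F n hn) :=
  SimpleGraph.induce (subVerts F n hn) (zdGraph F n)

/-- The coefficient sequence `h`: `h 0 = 1`,
`h j = F_{m,j+1}^n − Σ_{r=0}^{j−1} h r · F_{m,j−r}^n` for `j ≥ 1`. -/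
noncomputable def hseq (m n : ℕ) : ℕ → ℝ
  | 0 => 1
  | j + 1 => (genFib m (j + 2)) ^ n -
      ∑ r ∈ (Finset.range (j + 1)).attach, hseq m n r.1 * (genFib m (j + 1 - r.1)) ^ n
  decreasing_by exact Finset.mem_range.mp r.2

section Aux

open Finset

/-! ### Auxiliary facts about `genFib` -/

lemma genFib_zero (α : ℝ) : genFib α 0 = 1 := rfl
lemma genFib_one (α : ℝ) : genFib α 1 = 1 := rfl
lemma genFib_add_two (α : ℝ) (k : ℕ) :
    genFib α (k + 2) = genFib α (k + 1) + (α - 1) * genFib α k := rfl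

lemma genFib_pos {α : ℝ} (hα : 1 ≤ α) : ∀ k, 0 < genFib α k := by
  have key : ∀ k, 0 < genFib α k ∧ 0 < genFib α (k + 1) := by
    intro k
    induction k with
    | zero => exact ⟨by rw [genFib_zero]; norm_num, by rw [genFib_one]; norm_num⟩
    | succ k ih =>
      refine ⟨ih.2, ?_⟩
      rw [genFib_add_two]
      nlinarith [ih.1, ih.2]
  exact fun k => (key k).1

lemma genFib_ne {α : ℝ} (hα : 1 ≤ α) (k : ℕ) : genFib α k ≠ 0 :=
  ne_of_gt (genFib_pos hα k)

/-! ### The auxiliary vectors -/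

/-- `γ_k = F_{m,k+1} / F_{m,k}`. -/
noncomputable def gamv (m : ℕ) (k : ℕ) : ℝ := genFib m (k + 1) / genFib m k

/-- `x_k = F_{m,k} / F_{m,k+1}`. -/
noncomputable def xvv (m : ℕ) (k : ℕ) : ℝ := genFib m k / genFib m (k + 1)

/-- the vectors `b_k` with entries `x_k ^ (n-1-i)`, `i = 0, …, n-2`. -/
noncomputable def bvv (m n : ℕ) (k : ℕ) : Fin (n - 1) → ℝ :=
  fun i => xvv m k ^ (n - 1 - i.val)

lemma one_le_cast_m {m : ℕ} (hm : 2 ≤ m) : (1 : ℝ) ≤ (m : ℝ) := by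
  have : (2 : ℝ) ≤ (m : ℝ) := by exact_mod_cast hm
  linarith

lemma xvv_mul_gamv {m : ℕ} (hm : 2 ≤ m) (k : ℕ) : xvv m k * gamv m k = 1 := by
  have h1 := genFib_ne (one_le_cast_m hm) k
  have h2 := genFib_ne (one_le_cast_m hm) (k + 1)
  rw [xvv, gamv]; field_simp

lemma xvv_zero (m : ℕ) : xvv m 0 = 1 := by
  rw [xvv, genFib_zero, genFib_one]; norm_num

lemma bvv_zero (m n : ℕ) (i : Fin (n - 1)) : bvv m n 0 i = 1 := by
  rw [bvv, xvv_zero, one_pow]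

lemma one_add_sub_mul_xvv {m : ℕ} (hm : 2 ≤ m) (k : ℕ) :
    1 + ((m : ℝ) - 1) * xvv m k = gamv m (k + 1) := by
  have h2 := genFib_ne (one_le_cast_m hm) (k + 1)
  rw [xvv, gamv, genFib_add_two]
  field_simp

/-! ### The key lemma: `P bₖ = γ_{k+1}ⁿ b_{k+1} − e` -/

lemma Pmat_mulVec_bvv {m n : ℕ} (hm : 2 ≤ m) (hn : 2 ≤ n) (k : ℕ) :
    Pmat m n *ᵥ bvv m n k = fun i => gamv m (k + 1) ^ n * bvv m n (k + 1) i - 1 := by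
  funext i
  have hi : i.val < n - 1 := i.isLt
  set x : ℝ := xvv m k with hx
  set y : ℝ := ((m : ℝ) - 1) * x with hy
  have step1 : (Pmat m n *ᵥ bvv m n k) i
      = ∑ j ∈ range (n - 1),
          (if n ≤ (i.val + 1) + (j + 1) then
            (Nat.choose (i.val + 1) (n - (j + 1)) : ℝ) * ((m : ℝ) - 1) ^ (n - (j + 1))
          else 0) * x ^ (n - 1 - j) := by
    rw [Matrix.mulVec, dotProduct]
    rw [← Fin.sum_univ_eq_sum_range (fun j =>
          (if n ≤ (i.val + 1) + (j + 1) then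
            (Nat.choose (i.val + 1) (n - (j + 1)) : ℝ) * ((m : ℝ) - 1) ^ (n - (j + 1))
          else 0) * x ^ (n - 1 - j)) (n - 1)]
    rfl
  have step2 : ∑ j ∈ range (n - 1),
          (if n ≤ (i.val + 1) + (j + 1) then
            (Nat.choose (i.val + 1) (n - (j + 1)) : ℝ) * ((m : ℝ) - 1) ^ (n - (j + 1))
          else 0) * x ^ (n - 1 - j)
      = ∑ j ∈ range (n - 1), (Nat.choose (i.val + 1) (j + 1) : ℝ) * y ^ (j + 1) := by
    rw [← Finset.sum_range_reflect]
    refine Finset.sum_congr rfl ?_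
    intro j hj
    rw [Finset.mem_range] at hj
    have e1 : n - ((n - 1 - 1 - j) + 1) = j + 1 := by omega
    have e2 : n - 1 - (n - 1 - 1 - j) = j + 1 := by omega
    have e3 : (n ≤ (i.val + 1) + ((n - 1 - 1 - j) + 1)) ↔ j ≤ i.val := by omega
    rw [e1, e2]
    by_cases h : j ≤ i.val
    · rw [if_pos (e3.mpr h), hy, mul_pow]; ring
    · rw [if_neg (fun hc => h (e3.mp hc))]
      rw [Nat.choose_eq_zero_of_lt (by omega : i.val + 1 < j + 1)]
      simp
  have step3 : ∑ j ∈ range (n - 1), (Nat.choose (i.val + 1) (j + 1) : ℝ) * y ^ (j + 1)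
      = (∑ t ∈ range (n - 1 + 1), (Nat.choose (i.val + 1) t : ℝ) * y ^ t) - 1 := by
    rw [Finset.sum_range_succ' (fun t => (Nat.choose (i.val + 1) t : ℝ) * y ^ t) (n - 1)]
    simp
  have step4 : ∑ t ∈ range (n - 1 + 1), (Nat.choose (i.val + 1) t : ℝ) * y ^ t
      = (1 + y) ^ (i.val + 1) := by
    rw [← Finset.sum_subset (Finset.range_subset_range.mpr (by omega : i.val + 2 ≤ n - 1 + 1))
        (fun t _ ht => by
          rw [Finset.mem_range, not_lt] at ht
          rw [Nat.choose_eq_zero_of_lt (by omega : i.val + 1 < t)]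
          simp)]
    rw [add_comm (1 : ℝ) y, add_pow]
    refine Finset.sum_congr rfl ?_
    intro t _
    rw [one_pow]; ring
  have step5 : (1 + y) = gamv m (k + 1) := one_add_sub_mul_xvv hm k
  have step6 : gamv m (k + 1) ^ (i.val + 1)
      = gamv m (k + 1) ^ n * bvv m n (k + 1) i := by
    have hxg := xvv_mul_gamv hm (k + 1)
    have hsum : (i.val + 1) + (n - 1 - i.val) = n := by omega
    rw [bvv]
    calc gamv m (k + 1) ^ (i.val + 1)
        = gamv m (k + 1) ^ (i.val + 1) *
            ((gamv m (k + 1) * xvv m (k + 1)) ^ (n - 1 - i.val)) := by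
          rw [mul_comm (gamv m (k + 1)) (xvv m (k + 1)), hxg, one_pow, mul_one]
      _ = (gamv m (k + 1) ^ (i.val + 1) * gamv m (k + 1) ^ (n - 1 - i.val)) *
            xvv m (k + 1) ^ (n - 1 - i.val) := by rw [mul_pow]; ring
      _ = gamv m (k + 1) ^ n * xvv m (k + 1) ^ (n - 1 - i.val) := by
          rw [← pow_add, hsum]
  rw [step1, step2, step3, step4, step5, step6]

end Aux


section Aux2

open Finset

/-! ### Coefficients of `P^k e` in the basis `b_r` -/

noncomputable def dco (m n : ℕ) : ℕ → ℕ → ℝ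
  | 0, r => if r = 0 then 1 else 0
  | k + 1, 0 => -(∑ r ∈ Finset.range (k + 1), dco m n k r)
  | k + 1, s + 1 => dco m n k s * gamv m (s + 1) ^ n

lemma pow_mulVec_one {m n : ℕ} (hm : 2 ≤ m) (hn : 2 ≤ n) (k : ℕ) :
    ((Pmat m n) ^ k *ᵥ (fun _ => (1 : ℝ)))
      = fun i => ∑ r ∈ Finset.range (k + 1), dco m n k r * bvv m n r i := by
  induction k with
  | zero =>
    funext i
    rw [pow_zero, Matrix.one_mulVec]
    simp [dco, bvv_zero]
  | succ k ih =>
    rw [pow_succ', ← Matrix.mulVec_mulVec, ih]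
    funext i
    have lhs_eq : (Pmat m n *ᵥ fun j => ∑ r ∈ range (k + 1), dco m n k r * bvv m n r j) i
        = ∑ r ∈ range (k + 1),
            dco m n k r * (gamv m (r + 1) ^ n * bvv m n (r + 1) i - 1) := by
      calc (Pmat m n *ᵥ fun j => ∑ r ∈ range (k + 1), dco m n k r * bvv m n r j) i
          = ∑ j, Pmat m n i j * ∑ r ∈ range (k + 1), dco m n k r * bvv m n r j := by
            rw [Matrix.mulVec, dotProduct]
        _ = ∑ j, ∑ r ∈ range (k + 1), dco m n k r * (Pmat m n i j * bvv m n r j) := by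
            refine Finset.sum_congr rfl fun j _ => ?_
            rw [Finset.mul_sum]
            exact Finset.sum_congr rfl fun r _ => by ring
        _ = ∑ r ∈ range (k + 1), ∑ j, dco m n k r * (Pmat m n i j * bvv m n r j) :=
            Finset.sum_comm
        _ = ∑ r ∈ range (k + 1), dco m n k r * ((Pmat m n *ᵥ bvv m n r) i) := by
            refine Finset.sum_congr rfl fun r _ => ?_
            rw [Matrix.mulVec, dotProduct, Finset.mul_sum]
        _ = ∑ r ∈ range (k + 1),
              dco m n k r * (gamv m (r + 1) ^ n * bvv m n (r + 1) i - 1) := by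
            refine Finset.sum_congr rfl fun r _ => ?_
            rw [Pmat_mulVec_bvv hm hn r]
    rw [lhs_eq]
    rw [Finset.sum_range_succ' (fun s => dco m n (k + 1) s * bvv m n s i) (k + 1)]
    have d0 : dco m n (k + 1) 0 = -(∑ r ∈ range (k + 1), dco m n k r) := rfl
    have ds : ∀ s, dco m n (k + 1) (s + 1) = dco m n k s * gamv m (s + 1) ^ n := fun _ => rfl
    simp only [d0, ds, bvv_zero, mul_one, mul_sub]
    rw [Finset.sum_sub_distrib, sub_eq_add_neg]
    congr 1
    exact Finset.sum_congr rfl fun r _ => by ring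

lemma dco_diag {m n : ℕ} (hm : 2 ≤ m) (k : ℕ) :
    dco m n k k = genFib m (k + 1) ^ n := by
  induction k with
  | zero => simp [dco, genFib_one]
  | succ k ih =>
    have h : dco m n (k + 1) (k + 1) = dco m n k k * gamv m (k + 1) ^ n := rfl
    rw [h, ih, gamv, div_pow, mul_comm,
      div_mul_cancel₀ _ (pow_ne_zero n (genFib_ne (one_le_cast_m hm) (k + 1)))]

/-! ### The factorization `W = Vᵀ D T` -/

noncomputable def Tm (m n : ℕ) : Matrix (Fin (n - 1)) (Fin (n - 1)) ℝ :=
  fun r k => if r.val ≤ k.val then dco m n k.val r.val else 0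

lemma bvv_eq {m n : ℕ} (hm : 2 ≤ m) (r : ℕ) (i : Fin (n - 1)) :
    bvv m n r i = gamv m r ^ i.val * xvv m r ^ (n - 1) := by
  have hxg := xvv_mul_gamv hm r
  have hsum : (n - 1 - i.val) + i.val = n - 1 := by
    have := i.isLt; omega
  calc bvv m n r i
      = xvv m r ^ (n - 1 - i.val) * ((xvv m r * gamv m r) ^ i.val) := by
        rw [hxg, one_pow, mul_one]; rfl
    _ = gamv m r ^ i.val * (xvv m r ^ (n - 1 - i.val) * xvv m r ^ i.val) := by
        rw [mul_pow]; ring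
    _ = gamv m r ^ i.val * xvv m r ^ (n - 1) := by rw [← pow_add, hsum]

lemma walk_factor {m n : ℕ} (hm : 2 ≤ m) (hn : 2 ≤ n) :
    walkMatrix (Pmat m n)
      = (Matrix.vandermonde (fun r : Fin (n - 1) => gamv m r.val))ᵀ
        * Matrix.diagonal (fun r : Fin (n - 1) => xvv m r.val ^ (n - 1)) * Tm m n := by
  funext i k
  show ((Pmat m n ^ (k : ℕ)) *ᵥ fun _ => (1 : ℝ)) i = _
  rw [pow_mulVec_one hm hn k.val]
  rw [Matrix.mul_apply]
  have rhs_eq : ∀ j : Fin (n - 1),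
      ((Matrix.vandermonde (fun r : Fin (n - 1) => gamv m r.val))ᵀ
        * Matrix.diagonal (fun r : Fin (n - 1) => xvv m r.val ^ (n - 1))) i j * Tm m n j k
      = (fun j : ℕ => if j ≤ k.val then dco m n k.val j * bvv m n j i else 0) j.val := by
    intro j
    rw [Matrix.mul_diagonal, Matrix.transpose_apply, Matrix.vandermonde]
    show gamv m j.val ^ i.val * xvv m j.val ^ (n - 1) *
        (if j.val ≤ k.val then dco m n k.val j.val else 0) = _
    by_cases h : j.val ≤ k.val
    · simp only [if_pos h]
      rw [← bvv_eq hm]; ring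
    · simp only [if_neg h, mul_zero]
  calc ∑ r ∈ range (k.val + 1), dco m n k.val r * bvv m n r i
      = ∑ r ∈ range (k.val + 1),
          (if r ≤ k.val then dco m n k.val r * bvv m n r i else 0) :=
        Finset.sum_congr rfl fun r hr =>
          (if_pos (Nat.lt_succ_iff.mp (Finset.mem_range.mp hr))).symm
    _ = ∑ r ∈ range (n - 1),
          (if r ≤ k.val then dco m n k.val r * bvv m n r i else 0) :=
        Finset.sum_subset (Finset.range_subset_range.mpr k.isLt)
          (fun r _ hr => if_neg fun hc => hr (Finset.mem_range.mpr (by omega)))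
    _ = ∑ j : Fin (n - 1),
          (fun j : ℕ => if j ≤ k.val then dco m n k.val j * bvv m n j i else 0) j.val :=
        (Fin.sum_univ_eq_sum_range _ (n - 1)).symm
    _ = ∑ j : Fin (n - 1),
          ((Matrix.vandermonde (fun r : Fin (n - 1) => gamv m r.val))ᵀ
            * Matrix.diagonal (fun r : Fin (n - 1) => xvv m r.val ^ (n - 1))) i j
            * Tm m n j k :=
        Finset.sum_congr rfl fun j _ => (rhs_eq j).symm

end Aux2


section Aux3

open Finset

lemma vand_prod_convert (N : ℕ) (v : ℕ → ℝ) :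
    (∏ i : Fin N, ∏ j ∈ Finset.Ioi i, (v j.val - v i.val))
      = ∏ l ∈ Finset.range N, ∏ r ∈ Finset.range l, (v l - v r) := by
  have inner : ∀ i : Fin N, ∏ j ∈ Finset.Ioi i, (v j.val - v i.val)
      = ∏ j : Fin N, (if i.val < j.val then v j.val - v i.val else 1) := by
    intro i
    rw [← Finset.prod_filter]
    refine Finset.prod_congr ?_ fun _ _ => rfl
    ext j
    simp only [Finset.mem_Ioi, Finset.mem_filter, Finset.mem_univ, true_and, Fin.lt_def]
  calc ∏ i : Fin N, ∏ j ∈ Finset.Ioi i, (v j.val - v i.val)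
      = ∏ i : Fin N, ∏ j : Fin N, (if i.val < j.val then v j.val - v i.val else 1) :=
        Finset.prod_congr rfl fun i _ => inner i
    _ = ∏ i : Fin N, ∏ j ∈ range N, (if i.val < j then v j - v i.val else 1) :=
        Finset.prod_congr rfl fun i _ =>
          Fin.prod_univ_eq_prod_range (fun j => if i.val < j then v j - v i.val else 1) N
    _ = ∏ i ∈ range N, ∏ j ∈ range N, (if i < j then v j - v i else 1) :=
        Fin.prod_univ_eq_prod_range
          (fun i => ∏ j ∈ range N, (if i < j then v j - v i else 1)) N
    _ = ∏ j ∈ range N, ∏ i ∈ range N, (if i < j then v j - v i else 1) := Finset.prod_comm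
    _ = ∏ l ∈ range N, ∏ r ∈ range l, (v l - v r) := by
        refine Finset.prod_congr rfl fun l hl => ?_
        rw [Finset.mem_range] at hl
        rw [← Finset.prod_filter]
        refine Finset.prod_congr ?_ fun _ _ => rfl
        ext r
        simp only [Finset.mem_filter, Finset.mem_range]
        omega

lemma det_Tm {m n : ℕ} (hm : 2 ≤ m) :
    (Tm m n).det = ∏ k : Fin (n - 1), genFib m (k.val + 1) ^ n := by
  rw [Matrix.det_of_upperTriangular (M := Tm m n)
      (fun i j hij => if_neg (by simp only [id_eq] at hij; omega))]
  refine Finset.prod_congr rfl fun k _ => ?_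
  show (if k.val ≤ k.val then dco m n k.val k.val else 0) = _
  rw [if_pos le_rfl, dco_diag hm]

lemma per_factor {m : ℕ} (hm : 2 ≤ m) {n : ℕ} (hn : 2 ≤ n) (k : ℕ) :
    xvv m k ^ (n - 1) * genFib m (k + 1) ^ n
      = genFib m k ^ n * (genFib m (k + 1) / genFib m k) := by
  obtain ⟨n', rfl⟩ : ∃ n', n = n' + 2 := ⟨n - 2, by omega⟩
  have h1 := genFib_ne (one_le_cast_m hm) k
  have h2 := genFib_ne (one_le_cast_m hm) (k + 1)
  rw [xvv]
  have : n' + 2 - 1 = n' + 1 := rfl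
  rw [this, div_pow]
  field_simp
  ring

end Aux3

/-- Determinant formula for the walk matrix of `P[m,n]`:
`det W(P[m,n]) = (∏_{0 ≤ r < l ≤ n−2} (γ_l − γ_r)) · (∏_{k=0}^{n−2} C_k γ_k)`,
where `γ_k = F_{m,k+1}/F_{m,k}` and `C_k = F_{m,k}^n`. -/
theorem walkMatrix_Pmat_det (m n : ℕ) (hm : 2 ≤ m) (hn : 2 ≤ n) :
    (walkMatrix (Pmat m n)).det
      = (∏ l ∈ Finset.range (n - 1), ∏ r ∈ Finset.range l,
          (genFib m (l + 1) / genFib m l - genFib m (r + 1) / genFib m r)) *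
        ∏ k ∈ Finset.range (n - 1), (genFib m k) ^ n * (genFib m (k + 1) / genFib m k) := by
  rw [walk_factor hm hn, Matrix.det_mul, Matrix.det_mul, Matrix.det_transpose,
    Matrix.det_vandermonde, det_Tm hm, Matrix.det_diagonal]
  rw [vand_prod_convert (n - 1) (gamv m)]
  rw [mul_assoc]
  congr 1
  rw [Fin.prod_univ_eq_prod_range (fun k => xvv m k ^ (n - 1)) (n - 1),
    Fin.prod_univ_eq_prod_range (fun k => genFib m (k + 1) ^ n) (n - 1),
    ← Finset.prod_mul_distrib]
  exact Finset.prod_congr rfl fun k _ => per_factor hm hn k
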